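/- Let α ≥ 0, F_out > 0, and x̄ ≥ ȳ ≥ 0 with F_out·(x̄² + ȳ²) ≤ 2x̄. If α/√(1+α²) ≥ F_out·x̄ and F_out ≥ 2ȳ/(x̄² + ȳ²), then α/√(1+α²) ≥ F_out·x̄/2 + F_out·ȳ·√(F_out⁻²/(x̄² + ȳ²) − 1/4). -/

import Mathlib

/-! With `s = x̄² + ȳ²`, the hypothesis `F_out ≥ 2ȳ/s` says `ȳ / F_out ≤ s/2`; squaring gives
`ȳ² (F_out⁻²/s − 1/4) ≤ s/4 − ȳ²/4 = x̄²/4`, so the second term is at most `F_out · x̄/2`, and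
`F_out · x̄/2 + F_out · x̄/2 = F_out · x̄ ≤ α/√(1+α²)`. -/

lemma mul_inv_le_half_of_two_mul_div_le {F y s : ℝ} (hF : 0 < F) (h : 2 * y / s ≤ F)
    (hs : 0 < s) : y * F⁻¹ ≤ s / 2 := by
  rw [div_le_iff₀ hs] at h
  rw [← div_eq_mul_inv, div_le_iff₀ hF]
  linarith

lemma mul_sqrt_inv_sq_div_sub_quarter_le {F x y : ℝ} (hF : 0 < F) (hx : 0 ≤ x) (hy : 0 ≤ y)
    (h : 2 * y / (x ^ 2 + y ^ 2) ≤ F) :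
    y * √(F⁻¹ ^ 2 / (x ^ 2 + y ^ 2) - 1 / 4) ≤ x / 2 := by
  set s := x ^ 2 + y ^ 2
  have hquad : y ^ 2 * F⁻¹ ^ 2 / s ≤ s / 4 := by
    rcases (by positivity : 0 ≤ s).eq_or_lt with hs0 | hs
    · simp [← hs0]
    have hyr := mul_inv_le_half_of_two_mul_div_le hF h hs
    rw [div_le_iff₀ hs]
    nlinarith [mul_nonneg hy (inv_pos.mpr hF).le]
  have hsq : y ^ 2 * (F⁻¹ ^ 2 / s - 1 / 4) ≤ (x / 2) ^ 2 := by
    rw [mul_sub, ← mul_div_assoc]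
    linarith
  calc y * √(F⁻¹ ^ 2 / s - 1 / 4) = √(y ^ 2 * (F⁻¹ ^ 2 / s - 1 / 4)) := by
        rw [Real.sqrt_mul (sq_nonneg y), Real.sqrt_sq hy]
    _ ≤ x / 2 := Real.sqrt_le_iff.mpr ⟨by positivity, hsq⟩

theorem slope_condition_reduction_general (α Fout xb yb : ℝ) (hFout : 0 < Fout)
    (hy : 0 ≤ yb) (hxy : yb ≤ xb)
    (h1 : α / Real.sqrt (1 + α ^ 2) ≥ Fout * xb)
    (h2 : Fout ≥ 2 * yb / (xb ^ 2 + yb ^ 2)) :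
    α / Real.sqrt (1 + α ^ 2) ≥
      Fout * xb / 2 + Fout * yb * Real.sqrt (Fout⁻¹ ^ 2 / (xb ^ 2 + yb ^ 2) - 1 / 4) := by
  have hx : 0 ≤ xb := hy.trans hxy
  have hsecond : Fout * yb * √(Fout⁻¹ ^ 2 / (xb ^ 2 + yb ^ 2) - 1 / 4) ≤ Fout * (xb / 2) := by
    rw [mul_assoc]
    exact mul_le_mul_of_nonneg_left (mul_sqrt_inv_sq_div_sub_quarter_le hFout hx hy h2) hFout.le
  linarith

/-- Reduction of the slope condition in the circle-connection lemma. -/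
theorem slope_condition_reduction (α Fout xb yb : ℝ) (hα : 0 ≤ α) (hFout : 0 < Fout)
    (hy : 0 ≤ yb) (hxy : yb ≤ xb) (hcurv : Fout * (xb ^ 2 + yb ^ 2) ≤ 2 * xb)
    (h1 : α / Real.sqrt (1 + α ^ 2) ≥ Fout * xb)
    (h2 : Fout ≥ 2 * yb / (xb ^ 2 + yb ^ 2)) :
    α / Real.sqrt (1 + α ^ 2) ≥
      Fout * xb / 2 + Fout * yb * Real.sqrt (Fout⁻¹ ^ 2 / (xb ^ 2 + yb ^ 2) - 1 / 4) :=
  slope_condition_reduction_general α Fout xb yb hFout hy hxy h1 h2
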